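/- Let G be a group acting on a topological space X by homeomorphisms, and let x ∈ X. Let (P_x)₀ = {(β,h,l,z) ∈ C(I,X) × G × G × X : β(0) = h·x and β(1) = l·z}, with the (G×G)-action (g,k)·(β,h,l,z) = (g·β, g·h, g·l·k⁻¹, k·z), and let P = {(α,g,w) ∈ C(I,X) × G × X : α(0) = x and α(1) = g·w}, with the G-action k·(α,g,w) = (α, g·k⁻¹, k·w). Then the action groupoid (G×G) ⋉ (P_x)₀ is equivalent as a category to the action groupoid G ⋉ P; an equivalence is induced by the assignment (α,g,w) ↦ (α, 1, g, w) on objects and k ↦ (1,k) on group elements. -/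

import Mathlib

open CategoryTheory

variable (G X : Type*) [Group G] [TopologicalSpace X] [MulAction G X] [ContinuousConstSMul G X]

/-- `(P_x)₀ = {(β, h, l, z) ∈ C(I,X) × G × G × X : β 0 = h • x and β 1 = l • z}`, the object
space of the based path groupoid. -/
abbrev BasedPathGpd₀ (x : X) : Type _ :=
  {p : C(unitInterval, X) × G × G × X // p.1 0 = p.2.1 • x ∧ p.1 1 = p.2.2.1 • p.2.2.2}

/-- `P = {(α, g, w) ∈ C(I,X) × G × X : α 0 = x and α 1 = g • w}`. -/
abbrev BasedPathGpd (x : X) : Type _ :=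
  {q : C(unitInterval, X) × G × X // q.1 0 = x ∧ q.1 1 = q.2.1 • q.2.2}

/-- The `(G × G)`-action `(g, k) • (β, h, l, z) = (g • β, g * h, g * l * k⁻¹, k • z)` on
`(P_x)₀`. -/
instance (x : X) : SMul (G × G) (BasedPathGpd₀ G X x) :=
  ⟨fun gk p => ⟨(gk.1 • p.1.1, gk.1 * p.1.2.1, gk.1 * p.1.2.2.1 * gk.2⁻¹, gk.2 • p.1.2.2.2), by
    obtain ⟨⟨β, h, l, z⟩, hp0, hp1⟩ := p
    simp only [ContinuousMap.smul_apply] at *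
    rw [hp0, hp1]
    simp only [smul_smul]
    refine ⟨trivial, ?_⟩
    congr 1
    group⟩⟩

@[simp] lemma BasedPathGpd₀.coe_smul (x : X) (gk : G × G) (p : BasedPathGpd₀ G X x) :
    (gk • p).val =
      (gk.1 • p.1.1, gk.1 * p.1.2.1, gk.1 * p.1.2.2.1 * gk.2⁻¹, gk.2 • p.1.2.2.2) := rfl

instance (x : X) : MulAction (G × G) (BasedPathGpd₀ G X x) where
  one_smul p := Subtype.ext <| by simp
  mul_smul gk gk' p := Subtype.ext <| by
    simp [BasedPathGpd₀.coe_smul, mul_smul, mul_assoc]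

/-- The `G`-action `k • (α, g, w) = (α, g * k⁻¹, k • w)` on `P`. -/
instance (x : X) : SMul G (BasedPathGpd G X x) :=
  ⟨fun k q => ⟨(q.1.1, q.1.2.1 * k⁻¹, k • q.1.2.2), by
    obtain ⟨⟨α, g, w⟩, hq0, hq1⟩ := q
    refine ⟨hq0, ?_⟩
    simp only at *
    rw [hq1, smul_smul]
    congr 1
    group⟩⟩

@[simp] lemma BasedPathGpd.coe_smul (x : X) (k : G) (q : BasedPathGpd G X x) :
    (k • q).val = (q.1.1, q.1.2.1 * k⁻¹, k • q.1.2.2) := rfl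

instance (x : X) : MulAction G (BasedPathGpd G X x) where
  one_smul q := Subtype.ext <| by simp
  mul_smul k k' q := Subtype.ext <| by simp [BasedPathGpd.coe_smul, mul_smul, mul_assoc]


section Aux

variable {G X}

/-- Object part of the forward functor. -/
def fwdObj (x : X) (q : BasedPathGpd G X x) : BasedPathGpd₀ G X x :=
  ⟨(q.1.1, 1, q.1.2.1, q.1.2.2), ⟨by simpa using q.2.1, q.2.2⟩⟩

/-- Object part of the backward functor. -/
def bwdObj (x : X) (p : BasedPathGpd₀ G X x) : BasedPathGpd G X x :=
  ⟨(p.1.2.1⁻¹ • p.1.1, p.1.2.1⁻¹ * p.1.2.2.1, p.1.2.2.2), by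
    obtain ⟨⟨β, h, l, z⟩, h0, h1⟩ := p
    refine ⟨?_, ?_⟩
    · show h⁻¹ • β 0 = x
      rw [h0, inv_smul_smul]
    · show h⁻¹ • β 1 = (h⁻¹ * l) • z
      rw [h1, smul_smul]⟩

/-- The forward functor. -/
def fwdFun (x : X) :
    ActionCategory G (BasedPathGpd G X x) ⥤ ActionCategory (G × G) (BasedPathGpd₀ G X x) where
  obj a := ⟨(), fwdObj x a.2⟩
  map {a b} f := ⟨((1 : G), f.val), by
    obtain ⟨⟨⟩, (a : BasedPathGpd G X x)⟩ := a
    obtain ⟨⟨⟩, (b : BasedPathGpd G X x)⟩ := b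
    obtain ⟨(k : G), (hk : k • a = b)⟩ := f
    subst hk
    show ((1 : G), k) • fwdObj x a = fwdObj x (k • a)
    refine Subtype.ext ?_
    obtain ⟨⟨α, g, w⟩, h0, h1⟩ := a
    simp [fwdObj]⟩
  map_id a := rfl
  map_comp f g := Subtype.ext <| by
    show ((1 : G), g.val * f.val) = ((1 : G), g.val) * ((1 : G), f.val)
    simp [Prod.mul_def]

/-- The backward functor. -/
def bwdFun (x : X) :
    ActionCategory (G × G) (BasedPathGpd₀ G X x) ⥤ ActionCategory G (BasedPathGpd G X x) where
  obj a := ⟨(), bwdObj x a.2⟩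
  map {a b} f := ⟨f.val.2, by
    obtain ⟨⟨⟩, (a : BasedPathGpd₀ G X x)⟩ := a
    obtain ⟨⟨⟩, (b : BasedPathGpd₀ G X x)⟩ := b
    obtain ⟨(gk : G × G), (hgk : gk • a = b)⟩ := f
    subst hgk
    show gk.2 • bwdObj x a = bwdObj x (gk • a)
    refine Subtype.ext ?_
    obtain ⟨⟨β, h, l, z⟩, h0, h1⟩ := a
    obtain ⟨g, k⟩ := gk
    simp only [bwdObj, BasedPathGpd.coe_smul, BasedPathGpd₀.coe_smul, smul_smul, mul_inv_rev]
    have e1 : h⁻¹ * g⁻¹ * g = h⁻¹ := by group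
    have e2 : h⁻¹ * g⁻¹ * (g * l * k⁻¹) = h⁻¹ * l * k⁻¹ := by group
    rw [e1, e2]⟩
  map_id a := rfl
  map_comp f g := rfl

noncomputable def unitIso (x : X) :
    𝟭 (ActionCategory G (BasedPathGpd G X x)) ≅ fwdFun x ⋙ bwdFun x :=
  NatIso.ofComponents
    (fun a => @asIso _ _ _ _ (⟨(1 : G), by
      obtain ⟨⟨⟩, (a : BasedPathGpd G X x)⟩ := a
      show (1 : G) • a = bwdObj x (fwdObj x a)
      refine Subtype.ext ?_
      obtain ⟨⟨α, g, w⟩, h0, h1⟩ := a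
      simp [fwdObj, bwdObj]⟩ :
        a ⟶ (fwdFun x ⋙ bwdFun x).obj a) (IsIso.of_groupoid _))
    (fun {a b} f => Subtype.ext <| by
      show (1 * f.val : G) = f.val * 1
      rw [mul_one, one_mul])

noncomputable def counitIso (x : X) :
    bwdFun x ⋙ fwdFun x ≅ 𝟭 (ActionCategory (G × G) (BasedPathGpd₀ G X x)) :=
  NatIso.ofComponents
    (fun a => @asIso _ _ _ _ (⟨((a.2.1.2.1 : G), (1 : G)), by
      obtain ⟨⟨⟩, (a : BasedPathGpd₀ G X x)⟩ := a
      show ((a.1.2.1 : G), (1 : G)) • fwdObj x (bwdObj x a) = a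
      refine Subtype.ext ?_
      obtain ⟨⟨β, h, l, z⟩, h0, h1⟩ := a
      simp [fwdObj, bwdObj, smul_smul]⟩ :
        (bwdFun x ⋙ fwdFun x).obj a ⟶ a) (IsIso.of_groupoid _))
    (fun {a b} f => by
      obtain ⟨⟨⟩, (a : BasedPathGpd₀ G X x)⟩ := a
      obtain ⟨⟨⟩, (b : BasedPathGpd₀ G X x)⟩ := b
      obtain ⟨(gk : G × G), (hgk : gk • a = b)⟩ := f
      subst hgk
      refine Subtype.ext ?_
      show ((gk • a).1.2.1, (1 : G)) * ((1 : G), gk.2) = gk * (a.1.2.1, (1 : G))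
      obtain ⟨g, k⟩ := gk
      simp [Prod.mul_def, BasedPathGpd₀.coe_smul, mul_assoc])

end Aux

/-- The based path groupoid `(G × G) ⋉ (P_x)₀` is equivalent to the action groupoid `G ⋉ P`,
via an equivalence induced by `(α, g, w) ↦ (α, 1, g, w)` on objects and `k ↦ (1, k)` on group
elements. -/
theorem stmt5 (x : X) :
    ∃ e : ActionCategory G (BasedPathGpd G X x) ≌ ActionCategory (G × G) (BasedPathGpd₀ G X x),
      (∀ q : BasedPathGpd G X x,
        ((e.functor.obj (ActionCategory.objEquiv G (BasedPathGpd G X x) q)).back :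
            C(unitInterval, X) × G × G × X) = (q.1.1, 1, q.1.2.1, q.1.2.2)) ∧
      (∀ (a b : ActionCategory G (BasedPathGpd G X x)) (f : a ⟶ b),
        (e.functor.map f).val = ((1 : G), f.val)) :=
  ⟨CategoryTheory.Equivalence.mk (fwdFun x) (bwdFun x) (unitIso x) (counitIso x), fun _ => rfl, fun _ _ _ => rfl⟩
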